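/- (DiPmark is a distribution-preserving watermark.) Let N ≥ 1, α ∈ (0,1), n ≥ 1, and for each step k ∈ {1,…,n} let p_k be a probability mass function on Fin N (the language model's next-token distribution given the prefix), with DiP-reweight distribution P_{k,σ} for a permutation σ of Fin N. Then for every token sequence x_1,…,x_n ∈ Fin N, averaging over n independent uniformly random permutations σ_1,…,σ_n gives (1/N!)^n · ∑_{σ_1,…,σ_n ∈ Perm(Fin N)} ∏_{k=1}^n P_{k,σ_k}(x_k) = ∏_{k=1}^n p_k(x_k), i.e., the watermarked sequence distribution equals the original language-model sequence distribution. -/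
import Mathlib


/-- Cumulative sum `S_σ(i) = ∑_{j<i} q(σ(j))`. -/
noncomputable def cumS {N : ℕ} (q : Fin N → ℝ) (σ : Equiv.Perm (Fin N)) (i : ℕ) : ℝ :=
  ∑ j ∈ Finset.univ.filter (fun j : Fin N => (j : ℕ) < i), q (σ j)

/-- `F^α_σ(i) = (1/(1−α)) · max(S_σ(i) − α, 0)`. -/
noncomputable def Falpha {N : ℕ} (q : Fin N → ℝ) (σ : Equiv.Perm (Fin N)) (α : ℝ) (i : ℕ) : ℝ :=
  (1 / (1 - α)) * max (cumS q σ i - α) 0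

/-- The `P_W^α`-reweight weight of the token `σ(i)`: `P^α_σ(σ(i)) = F^α_σ(i+1) − F^α_σ(i)`. -/
noncomputable def PWalpha {N : ℕ} (q : Fin N → ℝ) (σ : Equiv.Perm (Fin N)) (α : ℝ)
    (t : Fin N) : ℝ :=
  Falpha q σ α ((σ.symm t : ℕ) + 1) - Falpha q σ α (σ.symm t : ℕ)

/-- The DiP-reweight distribution `P_σ = (1−α)·P^α_σ + α·P^{1−α}_σ` of `q` under `σ`. -/
noncomputable def DiP {N : ℕ} (q : Fin N → ℝ) (σ : Equiv.Perm (Fin N)) (α : ℝ)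
    (t : Fin N) : ℝ :=
  (1 - α) * PWalpha q σ α t + α * PWalpha q σ (1 - α) t

lemma max_sub_max_neg (a : ℝ) : max a 0 - max (-a) 0 = a := by
  rcases le_total a 0 with h | h
  · rw [max_eq_right h, max_eq_left (by linarith)]; ring
  · rw [max_eq_left h, max_eq_right (by linarith)]; ring

lemma cumS_succ {N : ℕ} (q : Fin N → ℝ) (σ : Equiv.Perm (Fin N)) (i : Fin N) :
    cumS q σ ((i : ℕ) + 1) = cumS q σ (i : ℕ) + q (σ i) := by
  unfold cumS
  have h : Finset.univ.filter (fun j : Fin N => (j : ℕ) < (i : ℕ) + 1)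
      = insert i (Finset.univ.filter (fun j : Fin N => (j : ℕ) < (i : ℕ))) := by
    ext j
    simp only [Finset.mem_filter, Finset.mem_univ, true_and, Finset.mem_insert]
    constructor
    · intro hj
      rcases Nat.lt_succ_iff_lt_or_eq.mp hj with h | h
      · exact Or.inr h
      · exact Or.inl (Fin.ext h)
    · rintro (rfl | h)
      · omega
      · omega
  rw [h, Finset.sum_insert (by simp)]
  ring

lemma cumS_rev {N : ℕ} (q : Fin N → ℝ) (hq : ∑ j, q j = 1) (σ : Equiv.Perm (Fin N)) (i : ℕ) :
    cumS q (σ * Fin.revPerm) i = 1 - cumS q σ (N - i) := by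
  have htot : ∑ j, q (σ j) = 1 := by rw [Equiv.sum_comp σ q]; exact hq
  have hsplit := Finset.sum_filter_add_sum_filter_not Finset.univ
    (fun j : Fin N => (j : ℕ) < N - i) (fun j => q (σ j))
  unfold cumS
  have h1 : ∑ j ∈ Finset.univ.filter (fun j : Fin N => (j : ℕ) < i), q ((σ * Fin.revPerm : Equiv.Perm (Fin N)) j)
      = ∑ j ∈ Finset.univ.filter (fun j : Fin N => ¬ (j : ℕ) < N - i), q (σ j) := by
    refine Finset.sum_nbij' Fin.rev Fin.rev ?_ ?_ ?_ ?_ ?_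
    · intro a ha
      simp only [Finset.mem_filter, Finset.mem_univ, true_and, Fin.val_rev] at ha ⊢
      have := a.is_lt
      omega
    · intro a ha
      simp only [Finset.mem_filter, Finset.mem_univ, true_and, Fin.val_rev] at ha ⊢
      have := a.is_lt
      omega
    · intro a _; exact Fin.rev_rev a
    · intro a _; exact Fin.rev_rev a
    · intro a _; rfl
  rw [h1]
  linarith [hsplit, htot]

lemma symm_mul_rev {N : ℕ} (σ : Equiv.Perm (Fin N)) (t : Fin N) :
    (σ * Fin.revPerm).symm t = Fin.rev (σ.symm t) := by
  simp [Equiv.Perm.mul_def, Fin.revPerm_symm]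

lemma dip_pair {N : ℕ} (q : Fin N → ℝ) (hq : ∑ j, q j = 1) (σ : Equiv.Perm (Fin N))
    (α : ℝ) (h0 : 0 < α) (h1 : α < 1) (t : Fin N) :
    DiP q σ α t + DiP q (σ * Fin.revPerm) α t = 2 * q t := by
  set i : Fin N := σ.symm t with hi
  have hN : 0 < N := i.pos
  have hiN : (i : ℕ) < N := i.is_lt
  set S : ℝ := cumS q σ (i : ℕ) with hS
  have hqt : q (σ i) = q t := by rw [hi, Equiv.apply_symm_apply]
  have hS1 : cumS q σ ((i : ℕ) + 1) = S + q t := by rw [cumS_succ, hqt]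
  have hr : ((σ * Fin.revPerm).symm t : ℕ) = N - 1 - (i : ℕ) := by
    rw [symm_mul_rev, Fin.val_rev]; omega
  have hrS1 : cumS q (σ * Fin.revPerm) (((σ * Fin.revPerm).symm t : ℕ) + 1) = 1 - S := by
    rw [hr, cumS_rev q hq, show N - (N - 1 - (i : ℕ) + 1) = (i : ℕ) by omega]
  have hrS : cumS q (σ * Fin.revPerm) ((σ * Fin.revPerm).symm t : ℕ) = 1 - (S + q t) := by
    rw [hr, cumS_rev q hq, show N - (N - 1 - (i : ℕ)) = (i : ℕ) + 1 by omega, hS1]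
  unfold DiP PWalpha Falpha
  rw [hS1, hrS1, hrS, ← hS]
  have hα : α ≠ 0 := ne_of_gt h0
  have hα' : (1 : ℝ) - α ≠ 0 := by linarith
  have e1 : max (S + q t - α) 0 - max (1 - (S + q t) - (1 - α)) 0 = S + q t - α := by
    rw [show (1 : ℝ) - (S + q t) - (1 - α) = -(S + q t - α) by ring]
    exact max_sub_max_neg _
  have e2 : max (S + q t - (1 - α)) 0 - max (1 - (S + q t) - α) 0 = S + q t - (1 - α) := by
    rw [show (1 : ℝ) - (S + q t) - α = -(S + q t - (1 - α)) by ring]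
    exact max_sub_max_neg _
  have e3 : max (S - α) 0 - max (1 - S - (1 - α)) 0 = S - α := by
    rw [show (1 : ℝ) - S - (1 - α) = -(S - α) by ring]
    exact max_sub_max_neg _
  have e4 : max (S - (1 - α)) 0 - max (1 - S - α) 0 = S - (1 - α) := by
    rw [show (1 : ℝ) - S - α = -(S - (1 - α)) by ring]
    exact max_sub_max_neg _
  rw [show (1 : ℝ) - (1 - α) = α by ring]
  have hmul : ∀ (β : ℝ), β ≠ 0 → ∀ u v : ℝ, β * (1/β * u - 1/β * v) = u - v := by
    intro β hβ u v; field_simp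
  rw [hmul (1-α) hα', hmul α hα, hmul (1-α) hα', hmul α hα]
  linarith [e1, e2, e3, e4]

lemma dip_avg {N : ℕ} (q : Fin N → ℝ) (hq : ∑ j, q j = 1) (α : ℝ)
    (h0 : 0 < α) (h1 : α < 1) (t : Fin N) :
    ∑ σ : Equiv.Perm (Fin N), DiP q σ α t = (Nat.factorial N : ℝ) * q t := by
  have hbij : ∑ σ : Equiv.Perm (Fin N), DiP q (σ * Fin.revPerm) α t
      = ∑ σ : Equiv.Perm (Fin N), DiP q σ α t :=
    Fintype.sum_equiv (Equiv.mulRight Fin.revPerm) _ _ (fun σ => rfl)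
  have hsum : ∑ σ : Equiv.Perm (Fin N), (DiP q σ α t + DiP q (σ * Fin.revPerm) α t)
      = ∑ σ : Equiv.Perm (Fin N), (2 * q t) := by
    exact Finset.sum_congr rfl (fun σ _ => dip_pair q hq σ α h0 h1 t)
  rw [Finset.sum_add_distrib, hbij, Finset.sum_const, Finset.card_univ, Fintype.card_perm,
    Fintype.card_fin] at hsum
  have : (2 : ℝ) * ∑ σ : Equiv.Perm (Fin N), DiP q σ α t
      = 2 * ((Nat.factorial N : ℝ) * q t) := by
    rw [nsmul_eq_mul] at hsum
    linarith [hsum]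
  linarith

theorem stmt_7 (N : ℕ) (hN : 1 ≤ N) (α : ℝ) (hα0 : 0 < α) (hα1 : α < 1)
    (n : ℕ) (hn : 1 ≤ n) (p : Fin n → Fin N → ℝ)
    (hp : ∀ k j, 0 ≤ p k j) (hsum : ∀ k, ∑ j, p k j = 1)
    (x : Fin n → Fin N) :
    (1 / (Nat.factorial N : ℝ)) ^ n *
      ∑ σ : Fin n → Equiv.Perm (Fin N), ∏ k : Fin n, DiP (p k) (σ k) α (x k)
      = ∏ k : Fin n, p k (x k) := by
  have hfact : (Nat.factorial N : ℝ) ≠ 0 := Nat.cast_ne_zero.mpr (Nat.factorial_ne_zero N)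
  rw [← Fintype.prod_sum (fun k (σ : Equiv.Perm (Fin N)) => DiP (p k) σ α (x k))]
  have : ∀ k : Fin n, ∑ σ : Equiv.Perm (Fin N), DiP (p k) σ α (x k)
      = (Nat.factorial N : ℝ) * p k (x k) := fun k => dip_avg (p k) (hsum k) α hα0 hα1 (x k)
  rw [Finset.prod_congr rfl (fun k _ => this k), Finset.prod_mul_distrib,
    Finset.prod_const, Finset.card_univ, Fintype.card_fin]
  rw [one_div, inv_pow, inv_mul_eq_div, ← mul_comm, mul_div_assoc, div_self (pow_ne_zero _ hfact),
    mul_one]
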